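/- The solvable Leibniz superalgebra SLP^{n,m} with even basis x_1,...,x_n,t_1,t_2,t_3, odd basis y_1,...,y_m and nonzero products [x_i,x_1]=x_{i+1} (2≤i≤n-1), [y_j,x_1]=y_{j+1} (1≤j≤m-1), [t_1,x_1]=-x_1, [x_1,t_1]=x_1, [x_i,t_1]=(i-2)x_i (3≤i≤n), [y_j,t_1]=(j-1)y_j (2≤j≤m), [x_i,t_2]=x_i (2≤i≤n), [y_j,t_3]=y_j (1≤j≤m) (all other products zero), satisfies the super Leibniz identity. -/

import Mathlib

/-!
Both sides of the identity are trilinear, so it suffices to check it on basis vectors. Right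
multiplication by an odd basis vector `y_j` vanishes, so for odd `z` every term is zero; for even
`z` the sign is `+1` and the identity is a finite check of the structure constants.
-/

namespace SolvableFiliformLeibniz

/-- Index type of `SLP^{n,m}`: `x`-indices, then `t`-indices, then `y`-indices. -/
abbrev Idx (n m : ℕ) := Fin n ⊕ (Fin 3 ⊕ Fin m)

/-- Underlying vector space over ℂ. -/
abbrev V (n m : ℕ) := Idx n m →₀ ℂ

/-- `X n m k` is the basis vector `x_k` (1-based), or `0` if out of range. -/
noncomputable def X (n m k : ℕ) : V n m :=
  if h : 1 ≤ k ∧ k ≤ n then Finsupp.single (Sum.inl ⟨k - 1, by omega⟩) 1 else 0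

/-- `T n m s` is the basis vector `t_s` (`s ∈ {1,2,3}`), or `0` if out of range. -/
noncomputable def T (n m s : ℕ) : V n m :=
  if h : 1 ≤ s ∧ s ≤ 3 then Finsupp.single (Sum.inr (Sum.inl ⟨s - 1, by omega⟩)) 1 else 0

/-- `Y n m k` is the basis vector `y_k` (1-based), or `0` if out of range. -/
noncomputable def Y (n m k : ℕ) : V n m :=
  if h : 1 ≤ k ∧ k ≤ m then Finsupp.single (Sum.inr (Sum.inr ⟨k - 1, by omega⟩)) 1 else 0

/-- Structure constants of `SLP^{n,m}`:
`[x_i,x_1]=x_{i+1}` (2 ≤ i ≤ n-1), `[y_j,x_1]=y_{j+1}` (1 ≤ j ≤ m-1), `[t_1,x_1]=-x_1`,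
`[x_1,t_1]=x_1`, `[x_i,t_1]=(i-2)x_i` (3 ≤ i ≤ n), `[y_j,t_1]=(j-1)y_j` (2 ≤ j ≤ m),
`[x_i,t_2]=x_i` (2 ≤ i ≤ n), `[y_j,t_3]=y_j` (1 ≤ j ≤ m); all other products zero. -/
noncomputable def c (n m : ℕ) : Idx n m → Idx n m → V n m
  | Sum.inl i, Sum.inl j => if j.val = 0 ∧ 1 ≤ i.val then X n m (i.val + 2) else 0
  | Sum.inr (Sum.inr j), Sum.inl i => if i.val = 0 then Y n m (j.val + 2) else 0
  | Sum.inr (Sum.inl s), Sum.inl i =>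
      if s.val = 0 ∧ i.val = 0 then -X n m 1 else 0
  | Sum.inl i, Sum.inr (Sum.inl s) =>
      if s.val = 0 then
        (if i.val = 0 then X n m 1 else ((i.val - 1 : ℕ) : ℂ) • X n m (i.val + 1))
      else if s.val = 1 ∧ 1 ≤ i.val then X n m (i.val + 1) else 0
  | Sum.inr (Sum.inr j), Sum.inr (Sum.inl s) =>
      if s.val = 0 then ((j.val : ℕ) : ℂ) • Y n m (j.val + 1)
      else if s.val = 2 then Y n m (j.val + 1) else 0
  | _, _ => 0

/-- The product of `SLP^{n,m}`, as a bilinear map. -/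
noncomputable def br (n m : ℕ) (u v : V n m) : V n m :=
  Finsupp.lsum ℂ (fun a =>
    LinearMap.toSpanSingleton ℂ (V n m →ₗ[ℂ] V n m)
      (Finsupp.lsum ℂ (fun b => LinearMap.toSpanSingleton ℂ (V n m) (c n m a b)))) u v

/-- Parity of the basis indices (`x`'s and `t`'s even, `y`'s odd). -/
def par (n m : ℕ) : Idx n m → ZMod 2 :=
  Sum.elim (fun _ => 0) (Sum.elim (fun _ => 0) (fun _ => 1))

/-- `u` is homogeneous of degree `s`. -/
def IsHomog (n m : ℕ) (u : V n m) (s : ZMod 2) : Prop :=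
  ∀ a ∈ u.support, par n m a = s

end SolvableFiliformLeibniz

namespace Finsupp

variable {R α : Type*}

theorem linearMap_apply_eq_of_single_eq [Semiring R] {M : Type*} [AddCommMonoid M] [Module R M]
    {S : Set α} {f g : (α →₀ R) →ₗ[R] M} (h : ∀ a ∈ S, f (single a 1) = g (single a 1))
    {v : α →₀ R} (hv : ↑v.support ⊆ S) : f v = g v := by
  have hmem : v ∈ Submodule.span R ((fun a => single a (1 : R)) '' S) := by
    rwa [← supported_eq_span_single, mem_supported]
  refine LinearMap.eqOn_span' ?_ hmem
  rintro _ ⟨a, ha, rfl⟩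
  exact h a ha

theorem superLeibniz_of_single [CommRing R]
    (B : (α →₀ R) →ₗ[R] (α →₀ R) →ₗ[R] (α →₀ R)) (p : α → ZMod 2)
    (h : ∀ a b d, B (single a 1) (B (single b 1) (single d 1)) =
      B (B (single a 1) (single b 1)) (single d 1) -
        ((-1 : R) ^ (p b * p d).val) • B (B (single a 1) (single d 1)) (single b 1))
    (x : α →₀ R) {y z : α →₀ R} {s t : ZMod 2}
    (hy : ∀ b ∈ y.support, p b = s) (hz : ∀ d ∈ z.support, p d = t) :
    B x (B y z) = B (B x y) z - ((-1 : R) ^ (s * t).val) • B (B x z) y := by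
  set ε : R := (-1) ^ (s * t).val
  have on_singles : ∀ b d, p b = s → p d = t → ∀ x : α →₀ R,
      B x (B (single b 1) (single d 1)) =
        B (B x (single b 1)) (single d 1) - ε • B (B x (single d 1)) (single b 1) := by
    intro b d hb hd x
    refine linearMap_apply_eq_of_single_eq (S := Set.univ)
      (f := B.flip (B (single b 1) (single d 1)))
      (g := B.flip (single d 1) ∘ₗ B.flip (single b 1) -
        ε • (B.flip (single b 1) ∘ₗ B.flip (single d 1)))
      (fun a _ => ?_) (Set.subset_univ _)
    simpa [ε, ← hb, ← hd] using h a b d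
  have on_single : ∀ b, p b = s → ∀ x : α →₀ R,
      B x (B (single b 1) z) = B (B x (single b 1)) z - ε • B (B x z) (single b 1) := by
    intro b hb x
    exact linearMap_apply_eq_of_single_eq (S := {d | p d = t})
      (f := B x ∘ₗ B (single b 1))
      (g := B (B x (single b 1)) - ε • (B.flip (single b 1) ∘ₗ B x))
      (fun d hd => by simpa using on_singles b d hb hd x) hz
  exact linearMap_apply_eq_of_single_eq (S := {b | p b = s})
    (f := B x ∘ₗ B.flip z)
    (g := B.flip z ∘ₗ B x - ε • B (B x z))
    (fun b hb => by simpa using on_single b hb x) hy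

end Finsupp

namespace SolvableFiliformLeibniz

variable {n m : ℕ}

open Finsupp (single)

noncomputable def bracket (n m : ℕ) : V n m →ₗ[ℂ] V n m →ₗ[ℂ] V n m :=
  Finsupp.lsum ℂ fun a => LinearMap.toSpanSingleton ℂ (V n m →ₗ[ℂ] V n m)
    (Finsupp.lsum ℂ fun b => LinearMap.toSpanSingleton ℂ (V n m) (c n m a b))

theorem br_eq_bracket (u v : V n m) : br n m u v = bracket n m u v := rfl

@[simp]
theorem bracket_single_single (a b : Idx n m) (r s : ℂ) :
    bracket n m (single a r) (single b s) = (r * s) • c n m a b := by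
  simp [bracket, smul_smul]

theorem c_inr_inr (q : Idx n m) (j : Fin m) : c n m q (Sum.inr (Sum.inr j)) = 0 := by
  rcases q with i | s | j' <;> rfl

theorem bracket_single_inr_inr (u : V n m) (j : Fin m) :
    bracket n m u (single (Sum.inr (Sum.inr j)) 1) = 0 := by
  simp [bracket, c_inr_inr]

theorem bracket_single_c_of_par_eq_zero (a b : Idx n m) {d : Idx n m} (hd : par n m d = 0) :
    bracket n m (single a 1) (c n m b d) =
      bracket n m (c n m a b) (single d 1) - bracket n m (c n m a d) (single b 1) := by
  rcases a with i | s | j <;> rcases b with i' | s' | j' <;> rcases d with i'' | s'' | j'' <;>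
    simp only [par, Sum.elim_inr, one_ne_zero] at hd <;>
    simp only [c] <;>
    (try split_ifs) <;>
    simp_all [X, Y, c, Finsupp.single_eq_zero] <;>
    (try split_ifs) <;>
    (try simp_all [X, Y, c, Finsupp.single_eq_zero]) <;>
    omega

theorem bracket_leibniz_single (a b d : Idx n m) :
    bracket n m (single a 1) (bracket n m (single b 1) (single d 1)) =
      bracket n m (bracket n m (single a 1) (single b 1)) (single d 1) -
        ((-1 : ℂ) ^ (par n m b * par n m d).val) •
          bracket n m (bracket n m (single a 1) (single d 1)) (single b 1) := by
  simp only [bracket_single_single, one_mul, one_smul]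
  rcases d with i | s | j
  · simpa [par] using bracket_single_c_of_par_eq_zero a b (d := Sum.inl i) rfl
  · simpa [par] using bracket_single_c_of_par_eq_zero a b (d := Sum.inr (Sum.inl s)) rfl
  · simp [c_inr_inr, bracket_single_inr_inr]

/-- The solvable Leibniz superalgebra `SLP^{n,m}` satisfies the super Leibniz identity. -/
theorem SLP_isLeibnizSuperalgebra (n m : ℕ) :
    ∀ (x y z : V n m) (sy sz : ZMod 2), IsHomog n m y sy → IsHomog n m z sz →
      br n m x (br n m y z) =
        br n m (br n m x y) z - ((-1 : ℂ) ^ (sy * sz).val) • br n m (br n m x z) y := by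
  intro x y z sy sz hy hz
  simp only [br_eq_bracket]
  exact Finsupp.superLeibniz_of_single (bracket n m) (par n m) bracket_leibniz_single x hy hz

end SolvableFiliformLeibniz
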